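/- Cylinder preservation (helix form): let the cylinder be C = {(cos t, sin t, h(t)) : t ∈ ℝ} embedded as x² + y² = 1 in ℝ³, and take P₀ = ((cos t₀, sin t₀, z₀), n₀) and P₁ = ((cos t₁, sin t₁, z₁), n₁) with n_i = (cos t_i, sin t_i, 0) and 0 < t₁ - t₀ < π. Then the point p_ω = (cos t_ω, sin t_ω, (1-ω)z₀ + ωz₁) with t_ω = (1-ω)t₀ + ωt₁ lies on the cylinder x² + y² = 1, and its associated normal n_ω = (cos t_ω, sin t_ω, 0) equals the geodesic average g_ω(n₀, n₁). -/

import Mathlib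

open Real Classical
open scoped RealInnerProductSpace

/-- Weighted geodesic average of two unit vectors on the sphere. -/
noncomputable def geodAvg (ω : ℝ) (n₀ n₁ : EuclideanSpace ℝ (Fin 3)) :
    EuclideanSpace ℝ (Fin 3) :=
  if n₀ = n₁ then n₀
  else
    (sin ((1 - ω) * arccos ⟪n₀, n₁⟫) / sin (arccos ⟪n₀, n₁⟫)) • n₀
      + (sin (ω * arccos ⟪n₀, n₁⟫) / sin (arccos ⟪n₀, n₁⟫)) • n₁

lemma keyCos (a b c : ℝ) : sin (c - a) * cos b + sin (a - b) * cos c = sin (c - b) * cos a := by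
  simp [sin_sub]; ring

lemma keySin (a b c : ℝ) : sin (c - a) * sin b + sin (a - b) * sin c = sin (c - b) * sin a := by
  simp [sin_sub]; ring

noncomputable def vec3 (x y z : ℝ) : EuclideanSpace ℝ (Fin 3) :=
  (WithLp.equiv 2 (Fin 3 → ℝ)).symm ![x, y, z]

theorem stmt10 (t₀ t₁ z₀ z₁ ω : ℝ) (ht : 0 < t₁ - t₀) (ht' : t₁ - t₀ < π)
    (hω : ω ∈ Set.Icc (0 : ℝ) 1) :
    (cos ((1 - ω) * t₀ + ω * t₁)) ^ 2 + (sin ((1 - ω) * t₀ + ω * t₁)) ^ 2 = 1 ∧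
      vec3 (cos ((1 - ω) * t₀ + ω * t₁)) (sin ((1 - ω) * t₀ + ω * t₁)) 0
        = geodAvg ω (vec3 (cos t₀) (sin t₀) 0) (vec3 (cos t₁) (sin t₁) 0) := by
  have hs : 0 < sin (t₁ - t₀) := sin_pos_of_pos_of_lt_pi ht ht'
  have hinner : ⟪vec3 (cos t₀) (sin t₀) 0, vec3 (cos t₁) (sin t₁) 0⟫ = cos (t₁ - t₀) := by
    simp [vec3, PiLp.inner_apply, Fin.sum_univ_three, cos_sub]
  have hne : vec3 (cos t₀) (sin t₀) 0 ≠ vec3 (cos t₁) (sin t₁) 0 := by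
    intro h
    have h0 : cos t₀ = cos t₁ := by
      have := congrFun (congrArg (fun v : EuclideanSpace ℝ (Fin 3) => (v : Fin 3 → ℝ)) h) 0
      simpa [vec3] using this
    have h1 : sin t₀ = sin t₁ := by
      have := congrFun (congrArg (fun v : EuclideanSpace ℝ (Fin 3) => (v : Fin 3 → ℝ)) h) 1
      simpa [vec3] using this
    have hc1 : cos (t₁ - t₀) = 1 := by
      rw [cos_sub, h0, h1]; nlinarith [sin_sq_add_cos_sq t₁]
    have : sin (t₁ - t₀) = 0 := by
      nlinarith [sin_sq_add_cos_sq (t₁ - t₀)]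
    linarith
  have harc : arccos ⟪vec3 (cos t₀) (sin t₀) 0, vec3 (cos t₁) (sin t₁) 0⟫ = t₁ - t₀ := by
    rw [hinner, arccos_cos ht.le ht'.le]
  refine ⟨cos_sq_add_sin_sq _, ?_⟩
  rw [geodAvg, if_neg hne, harc]
  have e1 : (1 - ω) * (t₁ - t₀) = t₁ - ((1 - ω) * t₀ + ω * t₁) := by ring
  have e2 : ω * (t₁ - t₀) = ((1 - ω) * t₀ + ω * t₁) - t₀ := by ring
  rw [e1, e2]
  set a := (1 - ω) * t₀ + ω * t₁ with ha
  ext i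
  fin_cases i <;>
    simp [vec3, PiLp.add_apply, PiLp.smul_apply, smul_eq_mul] <;>
    field_simp
  · linarith [keyCos a t₀ t₁]
  · linarith [keySin a t₀ t₁]
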